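/- Let A = ⟨A, ∨, 0, F⟩ be a join semilattice with 0 and operators. Then Con(A) is isomorphic to Don(A), the lattice of all reflexive, transitive relations R on A compatible with ∨ and every f ∈ F such that x ≥ y implies x R y; an isomorphism is given by θ ↦ θ ∘ ≥ (i.e., x R y iff x θ (x ∨ y)), with inverse R ↦ {(x,y) : x R (x∨y) and y R (x∨y)}. -/
import Mathlib


variable {A : Type*} [SemilatticeSup A] [OrderBot A]

/-- An operator on a join semilattice with zero: a unary `(⊔,0)`-endomorphism. -/
def IsOperator (f : A → A) : Prop :=
  (∀ x y : A, f (x ⊔ y) = f x ⊔ f y) ∧ f ⊥ = ⊥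

/-- A relation compatible with join and with each operator in `F`. -/
def Compatible (F : Set (A → A)) (R : A → A → Prop) : Prop :=
  (∀ x y z : A, R x y → R (x ⊔ z) (y ⊔ z)) ∧
    ∀ f ∈ F, ∀ x y, R x y → R (f x) (f y)

/-- A congruence of the semilattice with operators. -/
def IsCong (F : Set (A → A)) (θ : A → A → Prop) : Prop :=
  Equivalence θ ∧ Compatible F θ

/-- A don-relation: reflexive, transitive, compatible, and containing `≥`. -/
def IsDon (F : Set (A → A)) (R : A → A → Prop) : Prop :=
  Reflexive R ∧ Transitive R ∧ Compatible F R ∧ ∀ x y : A, y ≤ x → R x y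

/-- The congruence lattice, ordered by inclusion. -/
def ConA (A : Type*) [SemilatticeSup A] [OrderBot A] (F : Set (A → A)) : Type _ :=
  {θ : A → A → Prop // IsCong F θ}

/-- The lattice `Don(A)`, ordered by inclusion. -/
def Don (A : Type*) [SemilatticeSup A] [OrderBot A] (F : Set (A → A)) : Type _ :=
  {R : A → A → Prop // IsDon F R}

instance (F : Set (A → A)) : PartialOrder (ConA A F) := Subtype.partialOrder _
instance (F : Set (A → A)) : PartialOrder (Don A F) := Subtype.partialOrder _

/-- `Con(A) ≅ Don(A)` for a join semilattice `A` with `0` and operators `F`,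
via `θ ↦ θ ∘ ≥` (`x R y` iff `x θ (x ∨ y)`), with inverse
`R ↦ {(x,y) : x R (x∨y) and y R (x∨y)}`. -/
theorem con_iso_don (F : Set (A → A)) (hF : ∀ f ∈ F, IsOperator f) :
    ∃ e : ConA A F ≃o Don A F,
      (∀ (θ : ConA A F) (x y : A), (e θ).1 x y ↔ θ.1 x (x ⊔ y)) ∧
      (∀ (R : Don A F) (x y : A),
        (e.symm R).1 x y ↔ R.1 x (x ⊔ y) ∧ R.1 y (x ⊔ y)) := by
  -- forward map
  have toDon : ∀ θ : ConA A F, IsDon F (fun x y => θ.1 x (x ⊔ y)) := by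
    rintro ⟨θ, hEq, hJ, hO⟩
    refine ⟨fun x => ?_, fun x y z h1 h2 => ?_, ⟨fun x y z h => ?_, fun f hf x y h => ?_⟩,
      fun x y hle => ?_⟩
    · simpa using hEq.refl x
    · -- θ x (x⊔y), θ y (y⊔z) ⊢ θ x (x⊔z)
      have h3 : θ (x ⊔ y) (x ⊔ y ⊔ z) := by
        have := hJ y (y ⊔ z) x h2
        simpa [sup_comm, sup_assoc, sup_left_comm] using this
      have h4 : θ (x ⊔ z) (x ⊔ y ⊔ z) := by
        have := hJ x (x ⊔ y) z h1
        simpa [sup_comm, sup_assoc, sup_left_comm] using this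
      exact hEq.trans (hEq.trans h1 h3) (hEq.symm h4)
    · have := hJ x (x ⊔ y) z h
      simpa [sup_comm, sup_assoc, sup_left_comm] using this
    · have := hO f hf x (x ⊔ y) h
      simpa [(hF f hf).1] using this
    · have : x ⊔ y = x := sup_eq_left.2 hle
      simpa [this] using hEq.refl x
  -- inverse map
  have toCon : ∀ R : Don A F, IsCong F (fun x y => R.1 x (x ⊔ y) ∧ R.1 y (x ⊔ y)) := by
    rintro ⟨R, hR, hT, ⟨hJ, hO⟩, hGe⟩
    constructor
    · constructor
      · exact fun x => ⟨by simpa using hR x, by simpa using hR x⟩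
      · rintro x y ⟨h1, h2⟩; exact ⟨by simpa [sup_comm] using h2, by simpa [sup_comm] using h1⟩
      · rintro x y z ⟨h1, h2⟩ ⟨h3, h4⟩
        have hx : R x (x ⊔ y ⊔ z) := by
          refine hT h1 ?_
          have := hJ y (y ⊔ z) x h3
          simpa [sup_comm, sup_assoc, sup_left_comm] using this
        have hz : R z (x ⊔ y ⊔ z) := by
          refine hT h4 ?_
          have := hJ y (x ⊔ y) z h2
          simpa [sup_comm, sup_assoc, sup_left_comm] using this
        have hdown : R (x ⊔ y ⊔ z) (x ⊔ z) :=
          hGe _ _ (sup_le (le_sup_left.trans le_sup_left) le_sup_right)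
        exact ⟨hT hx hdown, hT hz hdown⟩
    · constructor
      · rintro x y z ⟨h1, h2⟩
        constructor
        · have := hJ x (x ⊔ y) z h1
          simpa [sup_comm, sup_assoc, sup_left_comm] using this
        · have := hJ y (x ⊔ y) z h2
          simpa [sup_comm, sup_assoc, sup_left_comm] using this
      · rintro f hf x y ⟨h1, h2⟩
        constructor
        · have := hO f hf x (x ⊔ y) h1
          simpa [(hF f hf).1] using this
        · have := hO f hf y (x ⊔ y) h2
          simpa [(hF f hf).1] using this
  -- the two maps
  let φ : ConA A F → Don A F := fun θ => ⟨fun x y => θ.1 x (x ⊔ y), toDon θ⟩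
  let ψ : Don A F → ConA A F := fun R => ⟨fun x y => R.1 x (x ⊔ y) ∧ R.1 y (x ⊔ y), toCon R⟩
  have left_inv : ∀ θ, ψ (φ θ) = θ := by
    rintro ⟨θ, hEq, hJ, hO⟩
    apply Subtype.ext
    funext x y
    apply propext
    show (θ x (x ⊔ (x ⊔ y)) ∧ θ y (y ⊔ (x ⊔ y))) ↔ θ x y
    simp only [sup_left_idem, sup_left_comm, sup_idem]
    constructor
    · rintro ⟨h1, h2⟩; exact hEq.trans h1 (hEq.symm h2)
    · intro h
      have h2 : θ (x ⊔ y) (y ⊔ y) := hJ x y y h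
      rw [sup_idem] at h2
      exact ⟨hEq.trans h (hEq.symm h2), hEq.symm h2⟩
  have right_inv : ∀ R, φ (ψ R) = R := by
    rintro ⟨R, hR, hT, ⟨hJ, hO⟩, hGe⟩
    apply Subtype.ext
    funext x y
    apply propext
    show (R x (x ⊔ (x ⊔ y)) ∧ R (x ⊔ y) (x ⊔ (x ⊔ y))) ↔ R x y
    simp only [sup_left_idem]
    constructor
    · rintro ⟨h1, _⟩
      exact hT h1 (hGe _ _ le_sup_right)
    · intro h
      refine ⟨?_, hR _⟩
      have := hJ x y x h
      simpa [sup_comm] using this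
  have mono : ∀ θ θ' : ConA A F, φ θ ≤ φ θ' ↔ θ ≤ θ' := by
    intro θ θ'
    constructor
    · intro h x y hxy
      rw [← left_inv θ] at hxy
      obtain ⟨ha, hb⟩ := hxy
      have : (ψ (φ θ')).1 x y := ⟨h x (x ⊔ y) ha, h y (x ⊔ y) hb⟩
      rwa [left_inv θ'] at this
    · intro h x y hxy
      exact h x (x ⊔ y) hxy
  refine ⟨{ toFun := φ, invFun := ψ, left_inv := left_inv, right_inv := right_inv,
            map_rel_iff' := by intro θ θ'; exact mono θ θ' }, ?_, ?_⟩
  · intro θ x y; exact Iff.rfl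
  · intro R x y; exact Iff.rfl
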